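/- For every positive integer k, the language L(A_k) = L( (a(ε + b^{k-1}c))^* (ε + b^k) ) over {a,b,c} is k-block deterministic. -/

import Mathlib

namespace BD

/-- Language-level First: symbols beginning some word of `L`. -/
def LFirst {α : Type*} (L : Set (List α)) : Set α := {x | ∃ w, x :: w ∈ L}

/-- Language-level Last. -/
def LLast {α : Type*} (L : Set (List α)) : Set α := {x | ∃ w, w ++ [x] ∈ L}

/-- Language-level Follow. -/
def LFollow {α : Type*} (L : Set (List α)) (x : α) : Set α :=
  {y | ∃ u v, u ++ x :: y :: v ∈ L}

/-- The list of symbol occurrences of a regular expression. -/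
def rchars {α : Type*} : RegularExpression α → List α
  | .zero => []
  | .epsilon => []
  | .char a => [a]
  | .plus p q => rchars p ++ rchars q
  | .comp p q => rchars p ++ rchars q
  | .star p => rchars p

/-- The Glushkov automaton of a (marked) language `L` over positions `π`,
with labelling map `f` dropping the marks. States are `Option π`, `none` being initial. -/
def glushkov {π β : Type*} (L : Set (List π)) (f : π → β) : NFA β (Option π) where
  step q b :=
    match q with
    | none => {s | ∃ y, y ∈ LFirst L ∧ f y = b ∧ s = some y}
    | some x => {s | ∃ y, y ∈ LFollow L x ∧ f y = b ∧ s = some y}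
  start := {none}
  accept := {s | ∃ y, y ∈ LLast L ∧ s = some y} ∪ {s | s = none ∧ [] ∈ L}

/-- Determinism of an automaton. -/
def Det {β σ : Type*} (A : NFA β σ) : Prop :=
  (∃ i, A.start = {i}) ∧
  ∀ p b q₁ q₂, q₁ ∈ A.step p b → q₂ ∈ A.step p b → q₁ = q₂

/-- `k`-lookahead determinism of an automaton. -/
def kLA {β σ : Type*} (A : NFA β σ) (k : ℕ) : Prop :=
  (∃ i, A.start = {i}) ∧
  ∀ p b q₁ q₂, q₁ ∈ A.step p b → q₂ ∈ A.step p b → q₁ ≠ q₂ →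
    ∀ w : List β, w.length = k - 1 → A.evalFrom {q₁} w = ∅ ∨ A.evalFrom {q₂} w = ∅

/-- `k`-block determinism of a block automaton (labels are nonempty words of length ≤ k,
single initial state, no outgoing label a prefix of another outgoing label). -/
def kBD {γ σ : Type*} (A : NFA (List γ) σ) (k : ℕ) : Prop :=
  (∃ i, A.start = {i}) ∧
  (∀ q b, (A.step q b).Nonempty → 1 ≤ b.length ∧ b.length ≤ k) ∧
  (∀ p b₁ b₂ q₁ q₂, q₁ ∈ A.step p b₁ → q₂ ∈ A.step p b₂ →
      (b₁, q₁) ≠ (b₂, q₂) → ¬ b₁ <+: b₂)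

/-- A language over `γ` is `k`-block deterministic if it is specified by a block
regular expression (given by its marked version `E` over positions `π` together with
the dropping map `f` to blocks) whose Glushkov automaton is `k`-block deterministic. -/
def IsKBlockDet {γ : Type} (L : Set (List γ)) (k : ℕ) : Prop :=
  ∃ (π : Type) (E : RegularExpression π) (f : π → List γ),
    (rchars E).Nodup ∧
    kBD (glushkov E.matches' f) k ∧
    L = {w | ∃ ws ∈ E.matches', (ws.map f).flatten = w}

/-- A language is `k`-lookahead deterministic if specified by a regular expression
whose Glushkov automaton is `k`-lookahead deterministic. -/
def IsKLookaheadDet {γ : Type} (L : Set (List γ)) (k : ℕ) : Prop :=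
  ∃ (π : Type) (E : RegularExpression π) (f : π → γ),
    (rchars E).Nodup ∧
    kLA (glushkov E.matches' f) k ∧
    L = {w | ∃ ws ∈ E.matches', ws.map f = w}

/-- A language is one-unambiguous if specified by a regular expression with
deterministic Glushkov automaton. -/
def IsOneUnambiguous {γ : Type} (L : Set (List γ)) : Prop :=
  ∃ (π : Type) (E : RegularExpression π) (f : π → γ),
    (rchars E).Nodup ∧
    Det (glushkov E.matches' f) ∧
    L = {w | ∃ ws ∈ E.matches', ws.map f = w}

/-- Reachability in an automaton. -/
def Reach {β σ : Type*} (A : NFA β σ) (p q : σ) : Prop := ∃ w, q ∈ A.evalFrom {p} w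

/-- `O` is an orbit (strongly connected component) of `A`. -/
def IsOrbit {β σ : Type*} (A : NFA β σ) (O : Set σ) : Prop :=
  ∃ q, O = {p | Reach A p q ∧ Reach A q p}

/-- A non-trivial orbit: one containing a cycle. -/
def NonTrivial {β σ : Type*} (A : NFA β σ) (O : Set σ) : Prop :=
  ∃ p ∈ O, ∃ w : List β, w ≠ [] ∧ p ∈ A.evalFrom {p} w

/-- In-gate of an orbit. -/
def InGate {β σ : Type*} (A : NFA β σ) (O : Set σ) (q : σ) : Prop :=
  q ∈ O ∧ (q ∈ A.start ∨ ∃ p ∉ O, ∃ b, q ∈ A.step p b)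

/-- Out-gate of an orbit. -/
def OutGate {β σ : Type*} (A : NFA β σ) (O : Set σ) (q : σ) : Prop :=
  q ∈ O ∧ (q ∈ A.accept ∨ ∃ p ∉ O, ∃ b, p ∈ A.step q b)

end BD

namespace BD

inductive ABC : Type | a | b | c
deriving DecidableEq

open ABC in
/-- The language of `(a(ε + b^{k-1}c))^* (ε + b^k)` over `{a,b,c}`. -/
def L1 (k : ℕ) : Set (List ABC) :=
  {w | ∃ (ps : List (List ABC)) (t : List ABC),
    (∀ p ∈ ps, p = [a] ∨ p = a :: (List.replicate (k - 1) b ++ [c])) ∧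
    (t = [] ∨ t = List.replicate k b) ∧
    w = ps.flatten ++ t}

inductive P : Type | x | y | z
deriving DecidableEq

open ABC

def fk (k : ℕ) : P → List ABC
  | .x => [a]
  | .y => List.replicate (k-1) b ++ [c]
  | .z => List.replicate k b

def E : RegularExpression P :=
  RegularExpression.comp
    (RegularExpression.star
      (RegularExpression.comp (RegularExpression.char P.x)
        (RegularExpression.plus RegularExpression.epsilon (RegularExpression.char P.y))))
    (RegularExpression.plus RegularExpression.epsilon (RegularExpression.char P.z))

lemma memM (w : List P) : w ∈ E.matches' ↔
    ∃ (qs : List (List P)) (t : List P), (∀ q ∈ qs, q = [P.x] ∨ q = [P.x, P.y]) ∧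
      (t = [] ∨ t = [P.z]) ∧ w = qs.flatten ++ t := by
  have hE : E = (RegularExpression.char P.x * (1 + RegularExpression.char P.y)).star *
      (1 + RegularExpression.char P.z) := rfl
  rw [hE]
  simp only [RegularExpression.matches'_mul, RegularExpression.matches'_star,
    RegularExpression.matches'_add, RegularExpression.matches'_epsilon,
    RegularExpression.matches'_char, Language.mem_mul, Language.mem_kstar]
  constructor
  · rintro ⟨u, hu, v, hv, rfl⟩
    obtain ⟨qs, rfl, hqs⟩ := hu
    refine ⟨qs, v, ?_, ?_, rfl⟩
    · intro q hq
      obtain ⟨u', hu', v', hv', rfl⟩ := hqs q hq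
      simp only [Language.mem_add, Language.mem_one, Set.mem_singleton_iff] at hu' hv'
      subst hu'
      rcases hv' with rfl | rfl
      · left; rfl
      · right; rfl
    · simp only [Language.mem_add, Language.mem_one] at hv
      exact hv
  · rintro ⟨qs, t, hqs, ht, rfl⟩
    refine ⟨qs.flatten, ⟨qs, rfl, ?_⟩, t, ?_, rfl⟩
    · intro q hq
      rcases hqs q hq with rfl | rfl
      · exact ⟨[P.x], rfl, [], Or.inl rfl, rfl⟩
      · exact ⟨[P.x], rfl, [P.y], Or.inr rfl, rfl⟩
    · rcases ht with rfl | rfl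
      · exact Or.inl rfl
      · exact Or.inr rfl

lemma fk_length (k : ℕ) (hk : 1 ≤ k) (y : P) : 1 ≤ (fk k y).length ∧ (fk k y).length ≤ k := by
  cases y <;> simp [fk] <;> omega

lemma fk_not_prefix {k : ℕ} (hk : 1 ≤ k) {y₁ y₂ : P} (h : y₁ ≠ y₂) :
    ¬ fk k y₁ <+: fk k y₂ := by
  obtain ⟨m, rfl⟩ : ∃ m, k = m + 1 := ⟨k - 1, by omega⟩
  intro hp
  cases y₁ <;> cases y₂ <;> simp_all [fk]
  · obtain ⟨t, ht⟩ := hp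
    cases m with
    | zero => simp at ht
    | succ n => simp [List.replicate_succ] at ht
  · obtain ⟨t, ht⟩ := hp
    simp [List.replicate_succ] at ht
  · have hl := hp.length_le
    simp at hl
    obtain rfl : m = 0 := by omega
    obtain ⟨t, ht⟩ := hp
    simp at ht
  · have := hp.eq_of_length (by simp)
    rw [List.replicate_succ' (n := m)] at this
    have := List.append_inj_right this (by simp)
    simp at this
  · have hl := hp.length_le
    simp at hl
    obtain rfl : m = 0 := by omega
    obtain ⟨t, ht⟩ := hp
    simp at ht
  · have := hp.eq_of_length (by simp)
    rw [List.replicate_succ' (n := m)] at this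
    have := List.append_inj_right this (by simp)
    simp at this

lemma flat_map_flatten (k : ℕ) (qs : List (List P)) :
    ((qs.flatten).map (fk k)).flatten
      = (qs.map (fun q => (q.map (fk k)).flatten)).flatten := by
  induction qs with
  | nil => simp
  | cons q qs ih =>
    simp only [List.flatten_cons, List.map_append, List.flatten_append, List.map_cons, ih]

/-- For every positive integer `k`, `L((a(ε + b^{k-1}c))^*(ε + b^k))` is
`k`-block deterministic. -/
theorem stmt1 : ∀ k : ℕ, 1 ≤ k → IsKBlockDet (L1 k) k := by
  intro k hk
  refine ⟨P, E, fk k, ?_, ?_, ?_⟩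
  · decide
  · refine ⟨⟨none, rfl⟩, ?_, ?_⟩
    · rintro q bl ⟨s, hs⟩
      cases q with
      | none =>
        obtain ⟨y, _, rfl, rfl⟩ := hs
        exact fk_length k hk y
      | some x =>
        obtain ⟨y, _, rfl, rfl⟩ := hs
        exact fk_length k hk y
    · intro p b₁ b₂ q₁ q₂ h₁ h₂ hne
      have key : ∀ y₁ y₂ : P, fk k y₁ = b₁ → fk k y₂ = b₂ → q₁ = some y₁ → q₂ = some y₂ →
          ¬ b₁ <+: b₂ := by
        rintro y₁ y₂ rfl rfl rfl rfl
        refine fk_not_prefix hk ?_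
        rintro rfl
        exact hne rfl
      cases p with
      | none =>
        obtain ⟨y₁, _, hb₁, hq₁⟩ := h₁
        obtain ⟨y₂, _, hb₂, hq₂⟩ := h₂
        exact key y₁ y₂ hb₁ hb₂ hq₁ hq₂
      | some x =>
        obtain ⟨y₁, _, hb₁, hq₁⟩ := h₁
        obtain ⟨y₂, _, hb₂, hq₂⟩ := h₂
        exact key y₁ y₂ hb₁ hb₂ hq₁ hq₂
  · ext w
    constructor
    · rintro ⟨ps, t, hps, ht, rfl⟩
      classical
      set h : List ABC → List P := fun p => if p = [a] then [P.x] else [P.x, P.y] with hh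
      refine ⟨(ps.map h).flatten ++ (if t = [] then [] else [P.z]), ?_, ?_⟩
      · rw [memM]
        refine ⟨ps.map h, _, ?_, ?_, rfl⟩
        · intro q hq
          simp only [List.mem_map] at hq
          obtain ⟨p, hp, rfl⟩ := hq
          rcases hps p hp with rfl | rfl
          · left; simp [hh]
          · right
            simp only [hh]
            rw [if_neg]
            simp
        · split
          · exact Or.inl rfl
          · exact Or.inr rfl
      · rw [List.map_append, List.flatten_append, flat_map_flatten]
        have hmap : (ps.map h).map (fun q => (q.map (fk k)).flatten) = ps := by
          rw [List.map_map]
          have : ∀ p ∈ ps, ((fun q => (q.map (fk k)).flatten) ∘ h) p = p := by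
            intro p hp
            rcases hps p hp with rfl | rfl
            · simp [hh, fk]
            · simp only [Function.comp, hh]
              rw [if_neg (by simp)]
              simp [fk]
          rw [List.map_congr_left this]
          simp
        rw [hmap]
        congr 1
        rcases ht with rfl | rfl
        · simp
        · rw [if_neg (by simp; omega)]
          simp [fk]
    · rintro ⟨ws, hws, rfl⟩
      rw [memM] at hws
      obtain ⟨qs, t, hqs, ht, rfl⟩ := hws
      refine ⟨qs.map (fun q => (q.map (fk k)).flatten), (t.map (fk k)).flatten, ?_, ?_, ?_⟩
      · intro p hp
        simp only [List.mem_map] at hp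
        obtain ⟨q, hq, rfl⟩ := hp
        rcases hqs q hq with rfl | rfl
        · left; simp [fk]
        · right; simp [fk]
      · rcases ht with rfl | rfl
        · exact Or.inl rfl
        · right; simp [fk]
      · rw [List.map_append, List.flatten_append, flat_map_flatten]

end BD
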